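/- Define Φ_t(A) ∈ SL_n(ℝ) for A ∈ SL_n(ℝ) and t ≥ 0 by Φ_t(A)x = c(A,t)⁻¹ Σ_{i=1}^n syst_i(A)^t π_{Θ_i(A)}(Ax), where Θ_i(A) = (AΛ_{i-1}(A))^⊥ ∩ (AΛ_i(A)), π_{Θ_i(A)} is orthogonal projection onto Θ_i(A), and c(A,t) = (Π_i syst_i(A)^{t·dim Θ_i(A)})^{1/n}. Then for all x ∈ ℝ^n: |Φ_t(A)x| ≥ (syst₁(A)/ (Π_i syst_i(A)^{dim Θ_i(A)})^{1/n})^t · |Ax|, with equality if and only if x ∈ Λ₁(A). -/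

import Mathlib

open Matrix Submodule Module

/-- The Euclidean norm of a vector in `ℝⁿ`. -/
noncomputable def eucNorm {n : ℕ} (w : Fin n → ℝ) : ℝ := Real.sqrt (∑ i, (w i) ^ 2)

/-- The real vector associated to an integer vector. -/
def intVec {n : ℕ} (v : Fin n → ℤ) : Fin n → ℝ := fun i => (v i : ℝ)

/-- The systole (first minimum) of the lattice `Aℤⁿ`. -/
noncomputable def syst1 {n : ℕ} (A : Matrix (Fin n) (Fin n) ℝ) : ℝ :=
  sInf {r : ℝ | ∃ v : Fin n → ℤ, v ≠ 0 ∧ eucNorm (A.mulVec (intVec v)) = r}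

/-- The `i`-th systole (Minkowski's `i`-th successive minimum) of the lattice `Aℤⁿ`. -/
noncomputable def systI {n : ℕ} (A : Matrix (Fin n) (Fin n) ℝ) (i : ℕ) : ℝ :=
  sInf {r : ℝ | i ≤ Module.finrank ℝ (Submodule.span ℝ
    (intVec '' {v : Fin n → ℤ | eucNorm (A.mulVec (intVec v)) < r}))}

/-- The set of shortest (nonzero) integer vectors of `A`. -/
noncomputable def S1 {n : ℕ} (A : Matrix (Fin n) (Fin n) ℝ) : Set (Fin n → ℤ) :=
  {v | v ≠ 0 ∧ eucNorm (A.mulVec (intVec v)) = syst1 A}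

/-- `A` is well-rounded if its shortest vectors span `ℝⁿ`. -/
noncomputable def WellRounded {n : ℕ} (A : Matrix (Fin n) (Fin n) ℝ) : Prop :=
  Submodule.span ℝ (intVec '' S1 A) = ⊤

/-- The span of the integer vectors realized up to the `i`-th minimum. -/
noncomputable def LambdaI {n : ℕ} (A : Matrix (Fin n) (Fin n) ℝ) (i : ℕ) :
    Submodule ℝ (Fin n → ℝ) :=
  Submodule.span ℝ (intVec '' {v : Fin n → ℤ | eucNorm (A.mulVec (intVec v)) ≤ systI A i})

/-- The real matrix associated to an element of `SL_n(ℤ)`. -/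
def SLZtoR {n : ℕ} (γ : Matrix.SpecialLinearGroup (Fin n) ℤ) : Matrix (Fin n) (Fin n) ℝ :=
  (γ : Matrix (Fin n) (Fin n) ℤ).map (Int.cast)

/-- The element of Euclidean space associated to a vector in `ℝⁿ`. -/
noncomputable def vecE {n : ℕ} (w : Fin n → ℝ) : EuclideanSpace ℝ (Fin n) :=
  (WithLp.equiv 2 (Fin n → ℝ)).symm w

/-- `Λ_i(A)` as a subspace of Euclidean space, with `Λ₀(A) = 0`. -/
noncomputable def LambdaE {n : ℕ} (A : Matrix (Fin n) (Fin n) ℝ) :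
    ℕ → Submodule ℝ (EuclideanSpace ℝ (Fin n))
  | 0 => ⊥
  | (i + 1) => Submodule.span ℝ ((fun v : Fin n → ℤ => vecE (intVec v)) ''
      {v : Fin n → ℤ | eucNorm (A.mulVec (intVec v)) ≤ systI A (i + 1)})

/-- `Θ_i(A) = (AΛ_{i-1}(A))^⊥ ∩ (AΛ_i(A))`. -/
noncomputable def ThetaE {n : ℕ} (A : Matrix (Fin n) (Fin n) ℝ) (i : ℕ) :
    Submodule ℝ (EuclideanSpace ℝ (Fin n)) :=
  ((LambdaE A (i - 1)).map (Matrix.toEuclideanLin A))ᗮ ⊓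
    (LambdaE A i).map (Matrix.toEuclideanLin A)

/-- The normalization factor `c(A,t) = (∏ᵢ systᵢ(A)^{t·dim Θᵢ(A)})^{1/n}`. -/
noncomputable def cNorm {n : ℕ} (A : Matrix (Fin n) (Fin n) ℝ) (t : ℝ) : ℝ :=
  (∏ i ∈ Finset.Icc 1 n,
      systI A i ^ (t * (Module.finrank ℝ (ThetaE A i) : ℝ))) ^ ((1 : ℝ) / n)

/-- The linear map `Φ_t(A) : x ↦ c(A,t)⁻¹ ∑ᵢ systᵢ(A)^t π_{Θᵢ(A)}(Ax)`. -/
noncomputable def PhiLin {n : ℕ} (A : Matrix (Fin n) (Fin n) ℝ) (t : ℝ) :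
    EuclideanSpace ℝ (Fin n) →ₗ[ℝ] EuclideanSpace ℝ (Fin n) :=
  (cNorm A t)⁻¹ • ∑ i ∈ Finset.Icc 1 n, systI A i ^ t •
    ((ThetaE A i).subtype ∘ₗ (orthogonalProjection (ThetaE A i)).toLinearMap ∘ₗ
      Matrix.toEuclideanLin A)

/-!
The subspaces `Θᵢ(A)` are the successive orthogonal complements in the flag
`AΛ₁(A) ⊆ ⋯ ⊆ AΛₙ(A) = ℝⁿ`, so they are pairwise orthogonal and `Ax = ∑ᵢ π_{Θᵢ(A)}(Ax)`.
By Pythagoras, `c(A,t)² ‖Φ_t(A)x‖² = ∑ᵢ systᵢ(A)^{2t} ‖π_{Θᵢ(A)}(Ax)‖²`, and since every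
`systᵢ(A) ≥ syst₁(A)` this is at least `syst₁(A)^{2t} ‖Ax‖²`, with equality exactly when `Ax` has
no component in the `Θᵢ(A)` with `systᵢ(A) > syst₁(A)`, that is, when `Ax ∈ AΛ₁(A)`.
Discreteness of `Aℤⁿ` is what makes `syst₁(A)` positive and attained, and makes the `i`-th minimum
realised by `i` independent lattice vectors of norm `≤ systᵢ(A)`, whence `Λₙ(A) = ℝⁿ`.
-/

open Filter Topology Finset

section WeightedProjection

variable {ι E : Type*} [NormedAddCommGroup E] [InnerProductSpace ℝ E] {K : ι → Submodule ℝ E}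
  {s : Finset ι}

lemma orthogonalFamily_of_pairwise_isOrtho (hK : (s : Set ι).Pairwise (K · ⟂ K ·)) :
    OrthogonalFamily ℝ (fun i : s => K i) fun i => (K i).subtypeₗᵢ :=
  OrthogonalFamily.of_pairwise fun i j hij => hK i.2 j.2 (Subtype.coe_ne_coe.2 hij)

variable [∀ i, CompleteSpace (K i)]

lemma sum_starProjection_eq_self (hK : (s : Set ι).Pairwise (K · ⟂ K ·)) {y : E}
    (hy : y ∈ ⨆ i ∈ s, K i) : ∑ i ∈ s, (K i).starProjection y = y := by
  rw [iSup_subtype'] at hy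
  rw [← Finset.sum_coe_sort s]
  exact (orthogonalFamily_of_pairwise_isOrtho hK).sum_projection_of_mem_iSup y hy

lemma norm_sum_smul_starProjection_sq (hK : (s : Set ι).Pairwise (K · ⟂ K ·)) (w : ι → ℝ)
    (y : E) : ‖∑ i ∈ s, w i • (K i).starProjection y‖ ^ 2 =
      ∑ i ∈ s, w i ^ 2 * ‖(K i).starProjection y‖ ^ 2 := by
  have h := (orthogonalFamily_of_pairwise_isOrtho hK).norm_sum
    (fun i => w i • (K i).orthogonalProjectionOnto y) univ
  simp only [LinearIsometry.map_smul] at h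
  rw [← Finset.sum_coe_sort s, ← Finset.sum_coe_sort s]
  convert h using 2 with i
  · rfl
  rw [norm_smul, mul_pow, Real.norm_eq_abs, sq_abs, Submodule.starProjection_apply,
    Submodule.coe_norm]

lemma sq_norm_sum_smul_starProjection_sub (hK : (s : Set ι).Pairwise (K · ⟂ K ·)) {y : E}
    (hy : y ∈ ⨆ i ∈ s, K i) (w : ι → ℝ) (m : ℝ) :
    ‖∑ i ∈ s, w i • (K i).starProjection y‖ ^ 2 - (m * ‖y‖) ^ 2 =
      ∑ i ∈ s, (w i ^ 2 - m ^ 2) * ‖(K i).starProjection y‖ ^ 2 := by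
  have hy2 : ‖y‖ ^ 2 = ∑ i ∈ s, ‖(K i).starProjection y‖ ^ 2 := by
    simpa [sum_starProjection_eq_self hK hy] using
      norm_sum_smul_starProjection_sq hK (fun _ => 1) y
  rw [norm_sum_smul_starProjection_sq hK, mul_pow, hy2, Finset.mul_sum, ← Finset.sum_sub_distrib]
  simp_rw [sub_mul]

variable {w : ι → ℝ} {m : ℝ}

lemma mul_norm_le_norm_sum_smul_starProjection (hK : (s : Set ι).Pairwise (K · ⟂ K ·)) {y : E}
    (hy : y ∈ ⨆ i ∈ s, K i) (hm : 0 ≤ m) (hw : ∀ i ∈ s, m ≤ w i) :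
    m * ‖y‖ ≤ ‖∑ i ∈ s, w i • (K i).starProjection y‖ := by
  rw [← pow_le_pow_iff_left₀ (by positivity) (norm_nonneg _) two_ne_zero, ← sub_nonneg,
    sq_norm_sum_smul_starProjection_sub hK hy]
  exact Finset.sum_nonneg fun i hi =>
    mul_nonneg (sub_nonneg.2 (pow_le_pow_left₀ hm (hw i hi) 2)) (sq_nonneg _)

lemma norm_sum_smul_starProjection_eq_mul_norm_iff (hK : (s : Set ι).Pairwise (K · ⟂ K ·))
    {y : E} (hy : y ∈ ⨆ i ∈ s, K i) (hm : 0 ≤ m) (hw : ∀ i ∈ s, m ≤ w i) :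
    ‖∑ i ∈ s, w i • (K i).starProjection y‖ = m * ‖y‖ ↔
      ∀ i ∈ s, w i = m ∨ (K i).starProjection y = 0 := by
  have hterm (i) (hi : i ∈ s) : 0 ≤ (w i ^ 2 - m ^ 2) * ‖(K i).starProjection y‖ ^ 2 :=
    mul_nonneg (sub_nonneg.2 (pow_le_pow_left₀ hm (hw i hi) 2)) (sq_nonneg _)
  rw [← pow_left_inj₀ (norm_nonneg _) (by positivity) two_ne_zero, ← sub_eq_zero,
    sq_norm_sum_smul_starProjection_sub hK hy, Finset.sum_eq_zero_iff_of_nonneg hterm]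
  refine forall₂_congr fun i hi => ?_
  rw [mul_eq_zero, sub_eq_zero, pow_left_inj₀ (hm.trans (hw i hi)) hm two_ne_zero,
    pow_eq_zero_iff two_ne_zero, norm_eq_zero]

end WeightedProjection

section Flag

variable {E : Type*} [NormedAddCommGroup E] [InnerProductSpace ℝ E] {W : ℕ → Submodule ℝ E}
  {n : ℕ}

lemma isOrtho_orthogonal_inf_of_lt (hW : MonotoneOn W (Set.Iic n)) {i j : ℕ} (hij : i < j)
    (hj : j ≤ n) : W i ⟂ (W (j - 1))ᗮ ⊓ W j :=
  (Submodule.isOrtho_orthogonal_right (W (j - 1))).mono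
    (hW (by simp; omega) (by simp; omega) (by omega)) inf_le_left

lemma pairwise_isOrtho_orthogonal_inf (hW : MonotoneOn W (Set.Iic n)) :
    (Set.Iic n).Pairwise fun i j => (W (i - 1))ᗮ ⊓ W i ⟂ (W (j - 1))ᗮ ⊓ W j := by
  intro i hi j hj hij
  rcases hij.lt_or_gt with h | h
  · exact (isOrtho_orthogonal_inf_of_lt hW h hj).mono_left inf_le_right
  · exact ((isOrtho_orthogonal_inf_of_lt hW h hi).mono_left inf_le_right).symm

lemma iSup_orthogonal_inf_eq [∀ i, (W i).HasOrthogonalProjection]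
    (hW : MonotoneOn W (Set.Iic n)) (h0 : W 0 = ⊥) {k : ℕ} (hk : k ≤ n) :
    ⨆ i ∈ Finset.Icc 1 k, (W (i - 1))ᗮ ⊓ W i = W k := by
  induction k with
  | zero => simp [h0]
  | succ k ih =>
    rw [← Finset.insert_Icc_right_eq_Icc_add_one (by omega), Finset.iSup_insert, ih (by omega),
      sup_comm, Nat.add_sub_cancel]
    exact Submodule.sup_orthogonal_inf_of_hasOrthogonalProjection
      (hW (by simp; omega) (by simpa using hk) (by omega))

end Flag

section Lattice

variable {n : ℕ} {A : Matrix (Fin n) (Fin n) ℝ}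

lemma eucNorm_eq_norm_vecE (w : Fin n → ℝ) : eucNorm w = ‖vecE w‖ := by
  simp [eucNorm, EuclideanSpace.norm_eq, vecE]

lemma intVec_eq_zero_iff {v : Fin n → ℤ} : intVec v = 0 ↔ v = 0 := by
  simp [funext_iff, intVec]

lemma tendsto_intVec_cofinite_cocompact :
    Tendsto (intVec (n := n)) cofinite (cocompact (Fin n → ℝ)) := by
  unfold intVec
  simpa only [coprodᵢ_cofinite, coprodᵢ_cocompact] using
    Tendsto.pi_map_coprodᵢ fun _ : Fin n => Int.tendsto_coe_cofinite

lemma tendsto_eucNorm_mulVec_intVec (hA : IsUnit A) :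
    Tendsto (fun v => eucNorm (A *ᵥ intVec v)) cofinite atTop := by
  let L : (Fin n → ℝ) →ₗ[ℝ] EuclideanSpace ℝ (Fin n) :=
    (WithLp.linearEquiv 2 ℝ (Fin n → ℝ)).symm.toLinearMap ∘ₗ A.mulVecLin
  have hL : Function.Injective L :=
    (WithLp.linearEquiv 2 ℝ (Fin n → ℝ)).symm.injective.comp
      (Matrix.mulVec_injective_iff_isUnit.2 hA)
  simp_rw [eucNorm_eq_norm_vecE]
  exact tendsto_norm_cocompact_atTop.comp
    ((L.isClosedEmbedding_of_injective (LinearMap.ker_eq_bot.2 hL)).tendsto_cocompact.comp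
      tendsto_intVec_cofinite_cocompact)

lemma finite_setOf_eucNorm_mulVec_intVec_le (hA : IsUnit A) (R : ℝ) :
    {v : Fin n → ℤ | eucNorm (A *ᵥ intVec v) ≤ R}.Finite := by
  simpa only [not_lt] using
    eventually_cofinite.1 ((tendsto_eucNorm_mulVec_intVec hA).eventually_gt_atTop R)

lemma eucNorm_mulVec_intVec_pos (hA : IsUnit A) {v : Fin n → ℤ} (hv : v ≠ 0) :
    0 < eucNorm (A *ᵥ intVec v) := by
  have hAv : A *ᵥ intVec v ≠ 0 := by
    rw [Ne, ← Matrix.mulVec_zero A]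
    exact (Matrix.mulVec_injective_iff_isUnit.2 hA).ne (intVec_eq_zero_iff.not.2 hv)
  rw [eucNorm_eq_norm_vecE, norm_pos_iff]
  simpa [vecE] using hAv

lemma isLeast_syst1 (hn : 0 < n) (hA : IsUnit A) :
    IsLeast {r | ∃ v : Fin n → ℤ, v ≠ 0 ∧ eucNorm (A *ᵥ intVec v) = r} (syst1 A) := by
  obtain ⟨v₀, hv₀, hmin⟩ := (tendsto_eucNorm_mulVec_intVec hA).exists_within_forall_le
    (s := {v | v ≠ 0}) ⟨Pi.single ⟨0, hn⟩ 1, by simp⟩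
  have h : IsLeast {r | ∃ v : Fin n → ℤ, v ≠ 0 ∧ eucNorm (A *ᵥ intVec v) = r}
      (eucNorm (A *ᵥ intVec v₀)) :=
    ⟨⟨v₀, hv₀, rfl⟩, by rintro _ ⟨v, hv, rfl⟩; exact hmin v hv⟩
  rwa [syst1, h.csInf_eq]

lemma syst1_pos (hn : 0 < n) (hA : IsUnit A) : 0 < syst1 A := by
  obtain ⟨v, hv, hv_eq⟩ := (isLeast_syst1 hn hA).1
  exact hv_eq ▸ eucNorm_mulVec_intVec_pos hA hv

/-- `systI A i` is an infimum of strict thresholds `r`; this gap above every `m` is what turns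
`< r` into `≤ systI A i` in `le_finrank_LambdaI`. -/
lemma eventually_setOf_eucNorm_lt_subset (hA : IsUnit A) (m : ℝ) :
    ∀ᶠ r in 𝓝[>] m, {v : Fin n → ℤ | eucNorm (A *ᵥ intVec v) < r} ⊆
      {v | eucNorm (A *ᵥ intVec v) ≤ m} := by
  have hfin := (finite_setOf_eucNorm_mulVec_intVec_le hA (m + 1)).inter_of_left
    {v | m < eucNorm (A *ᵥ intVec v)}
  filter_upwards [Ioo_mem_nhdsGT (lt_add_one m),
    (eventually_all_finite hfin).2 fun v hv => Ioo_mem_nhdsGT hv.2] with r hr hfar v hv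
  refine not_lt.1 fun (hvm : m < eucNorm (A *ᵥ intVec v)) => ?_
  exact (hfar v ⟨(hv.trans hr.2).le, hvm⟩).2.not_gt hv

def spanBelow (A : Matrix (Fin n) (Fin n) ℝ) (r : ℝ) : Submodule ℝ (Fin n → ℝ) :=
  Submodule.span ℝ (intVec '' {v | eucNorm (A *ᵥ intVec v) < r})

def systISet (A : Matrix (Fin n) (Fin n) ℝ) (i : ℕ) : Set ℝ :=
  {r | i ≤ finrank ℝ (spanBelow A r)}

lemma systI_eq_sInf (i : ℕ) : systI A i = sInf (systISet A i) := rfl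

lemma spanBelow_mono : Monotone (spanBelow A) := fun _ _ hrs =>
  Submodule.span_mono (Set.image_mono fun _ hv => lt_of_lt_of_le hv hrs)

lemma spanBelow_eq_bot_of_nonpos {r : ℝ} (hr : r ≤ 0) : spanBelow A r = ⊥ := by
  rw [spanBelow, Submodule.span_eq_bot]
  rintro _ ⟨v, hv, -⟩
  exact absurd hv (not_lt.2 (hr.trans (Real.sqrt_nonneg _)))

lemma eventually_spanBelow_eq_top : ∀ᶠ r in atTop, spanBelow A r = ⊤ := by
  filter_upwards [eventually_all.2 fun k => eventually_gt_atTop (eucNorm (A *ᵥ Pi.single k 1))]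
    with r hr
  rw [eq_top_iff, ← (Pi.basisFun ℝ (Fin n)).span_eq]
  refine Submodule.span_le.2 ?_
  rintro _ ⟨k, rfl⟩
  have hk : intVec (Pi.single k 1) = Pi.basisFun ℝ (Fin n) k := by
    ext j; simp [intVec, Pi.single_apply]
  exact hk ▸ Submodule.subset_span ⟨Pi.single k 1, by simpa [hk] using hr k, rfl⟩

lemma bddBelow_systISet {i : ℕ} (hi : 1 ≤ i) : BddBelow (systISet A i) := by
  refine ⟨0, fun r hr => not_lt.1 fun hr0 => ?_⟩
  rw [systISet, Set.mem_ofPred, spanBelow_eq_bot_of_nonpos hr0.le, finrank_bot] at hr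
  omega

lemma nonempty_systISet {i : ℕ} (hi : i ≤ n) : (systISet A i).Nonempty := by
  obtain ⟨r, hr⟩ := (eventually_spanBelow_eq_top (A := A)).exists
  refine ⟨r, ?_⟩
  rwa [systISet, Set.mem_ofPred, hr, finrank_top, finrank_fin_fun]

lemma systI_mono {i j : ℕ} (hi : 1 ≤ i) (hij : i ≤ j) (hj : j ≤ n) : systI A i ≤ systI A j :=
  csInf_le_csInf (bddBelow_systISet hi) (nonempty_systISet hj) fun _ hr => le_trans hij hr

lemma le_finrank_spanBelow {i : ℕ} (hi : i ≤ n) {r : ℝ} (hr : systI A i < r) :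
    i ≤ finrank ℝ (spanBelow A r) := by
  obtain ⟨r', hr', hr'r⟩ := exists_lt_of_csInf_lt (nonempty_systISet hi) hr
  exact hr'.trans (Submodule.finrank_mono (spanBelow_mono hr'r.le))

lemma le_finrank_LambdaI (hA : IsUnit A) {i : ℕ} (hi : i ≤ n) :
    i ≤ finrank ℝ (LambdaI A i) := by
  obtain ⟨r, hr_gt, hr⟩ := ((eventually_setOf_eucNorm_lt_subset hA (systI A i)).and
    self_mem_nhdsWithin).exists
  exact (le_finrank_spanBelow hi hr).trans
    (Submodule.finrank_mono (Submodule.span_mono (Set.image_mono hr_gt)))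

lemma systI_one (hn : 0 < n) (hA : IsUnit A) : systI A 1 = syst1 A := by
  obtain ⟨⟨v₀, hv₀, hv₀_eq⟩, hmin⟩ := isLeast_syst1 hn hA
  suffices systISet A 1 = Set.Ioi (syst1 A) by rw [systI_eq_sInf, this, csInf_Ioi]
  ext r
  rw [systISet, Set.mem_ofPred, Set.mem_Ioi, Submodule.one_le_finrank_iff, Ne, spanBelow,
    Submodule.span_eq_bot]
  simp only [not_forall]
  constructor
  · rintro ⟨_, ⟨v, hv, rfl⟩, hv0⟩
    exact (hmin ⟨v, intVec_eq_zero_iff.not.1 hv0, rfl⟩).trans_lt hv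
  · intro hr
    exact ⟨_, ⟨v₀, show _ < r from hv₀_eq ▸ hr, rfl⟩, intVec_eq_zero_iff.not.2 hv₀⟩

lemma syst1_le_systI (hn : 0 < n) (hA : IsUnit A) {i : ℕ} (hi : i ∈ Icc 1 n) :
    syst1 A ≤ systI A i :=
  systI_one hn hA ▸ systI_mono le_rfl (mem_Icc.1 hi).1 (mem_Icc.1 hi).2

lemma LambdaE_succ (i : ℕ) : LambdaE A (i + 1) =
    (LambdaI A (i + 1)).map (WithLp.linearEquiv 2 ℝ (Fin n → ℝ)).symm.toLinearMap := by
  rw [LambdaE, LambdaI, Submodule.map_span, Set.image_image]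
  rfl

lemma LambdaE_eq_top (hn : 0 < n) (hA : IsUnit A) : LambdaE A n = ⊤ := by
  obtain ⟨k, rfl⟩ := Nat.exists_eq_add_one.2 hn
  have h : LambdaI A (k + 1) = ⊤ := Submodule.eq_top_of_finrank_eq
    ((Submodule.finrank_le _).antisymm (by simpa using le_finrank_LambdaI hA le_rfl))
  rw [LambdaE_succ, h, Submodule.map_top, LinearEquiv.range]

/-- Only up to `n`: beyond it `systI A i = sInf ∅ = 0`, and `LambdaE A i` collapses. -/
lemma monotoneOn_LambdaE : MonotoneOn (LambdaE A) (Set.Iic n) := by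
  rintro (_ | i) - (_ | j) hj hij
  · exact le_rfl
  · exact bot_le
  · omega
  · exact Submodule.span_mono
      (Set.image_mono fun v hv => hv.trans (systI_mono le_add_self hij hj))

lemma toEuclideanLin_surjective (hA : IsUnit A) :
    Function.Surjective (Matrix.toEuclideanLin A) := fun y => by
  obtain ⟨v, hv⟩ := Matrix.mulVec_surjective_iff_isUnit.2 hA (WithLp.ofLp y)
  exact ⟨WithLp.toLp 2 v, by simp [hv]⟩

lemma monotoneOn_map_LambdaE :
    MonotoneOn (fun i => (LambdaE A i).map (Matrix.toEuclideanLin A)) (Set.Iic n) :=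
  fun _ hi _ hj hij => Submodule.map_mono (monotoneOn_LambdaE hi hj hij)

lemma pairwise_isOrtho_ThetaE :
    ((Icc 1 n : Finset ℕ) : Set ℕ).Pairwise (ThetaE A · ⟂ ThetaE A ·) :=
  (pairwise_isOrtho_orthogonal_inf monotoneOn_map_LambdaE).mono
    (by simp [Set.Icc_subset_Iic_self])

lemma iSup_ThetaE_eq_top (hn : 0 < n) (hA : IsUnit A) : ⨆ i ∈ Icc 1 n, ThetaE A i = ⊤ := by
  refine (iSup_orthogonal_inf_eq monotoneOn_map_LambdaE (Submodule.map_bot _) le_rfl).trans ?_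
  rw [LambdaE_eq_top hn hA, Submodule.map_top, LinearMap.range_eq_top]
  exact toEuclideanLin_surjective hA

lemma mem_LambdaE_one_iff (hn : 0 < n) (hA : IsUnit A) {x : EuclideanSpace ℝ (Fin n)} :
    x ∈ LambdaE A 1 ↔ ∀ i ∈ Icc 1 n,
      systI A i = syst1 A ∨ (ThetaE A i).starProjection (Matrix.toEuclideanLin A x) = 0 := by
  have hinj := LinearMap.injective_iff_surjective.2 (toEuclideanLin_surjective hA)
  rw [← SetLike.mem_coe, ← hinj.mem_set_image, ← Submodule.map_coe, SetLike.mem_coe]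
  set y := Matrix.toEuclideanLin A x
  constructor
  · intro hy i hi
    obtain ⟨hi1, hin⟩ := mem_Icc.1 hi
    rcases hi1.eq_or_lt with rfl | hi1
    · exact Or.inl (systI_one hn hA)
    · refine Or.inr ((Submodule.starProjection_apply_eq_zero_iff _).2 ?_)
      exact (isOrtho_orthogonal_inf_of_lt monotoneOn_map_LambdaE hi1 hin).le hy
  · intro h
    have hy : y ∈ ⨆ i ∈ Icc 1 n, ThetaE A i :=
      (iSup_ThetaE_eq_top hn hA).symm ▸ Submodule.mem_top
    rw [← sum_starProjection_eq_self pairwise_isOrtho_ThetaE hy]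
    refine Submodule.sum_mem _ fun i hi => ?_
    rcases h i hi with h | h
    · obtain ⟨k, rfl⟩ := Nat.exists_eq_add_one.2 (mem_Icc.1 hi).1
      have hLambda : LambdaE A (k + 1) = LambdaE A 1 := by
        rw [LambdaE, LambdaE, h, ← systI_one hn hA]
      rw [← hLambda]
      exact (Submodule.mem_inf.1 (Submodule.starProjection_apply_mem _ y)).2
    · exact h ▸ Submodule.zero_mem _

lemma cNorm_eq_rpow {t : ℝ} (h : ∀ i ∈ Icc 1 n, 0 ≤ systI A i) :
    cNorm A t = ((∏ i ∈ Icc 1 n,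
      systI A i ^ (finrank ℝ (ThetaE A i) : ℝ)) ^ ((1 : ℝ) / n)) ^ t := by
  have hprod : 0 ≤ ∏ i ∈ Icc 1 n, systI A i ^ (finrank ℝ (ThetaE A i) : ℝ) :=
    prod_nonneg fun i hi => Real.rpow_nonneg (h i hi) _
  rw [cNorm, ← Real.rpow_mul hprod, mul_comm, Real.rpow_mul hprod,
    ← Real.finsetProd_rpow (Icc 1 n) (fun i => systI A i ^ (finrank ℝ (ThetaE A i) : ℝ))
      fun i hi => Real.rpow_nonneg (h i hi) _]
  congr 1
  refine prod_congr rfl fun i hi => ?_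
  rw [← Real.rpow_mul (h i hi), mul_comm]

lemma norm_PhiLin_apply {t : ℝ} (hc : 0 ≤ cNorm A t) (x : EuclideanSpace ℝ (Fin n)) :
    ‖PhiLin A t x‖ = (cNorm A t)⁻¹ *
      ‖∑ i ∈ Icc 1 n,
        systI A i ^ t • (ThetaE A i).starProjection (Matrix.toEuclideanLin A x)‖ := by
  rw [PhiLin, LinearMap.smul_apply, norm_smul, norm_inv, Real.norm_of_nonneg hc]
  simp only [LinearMap.sum_apply, LinearMap.smul_apply]
  rfl

end Lattice

/-- `|Φ_t(A)x| ≥ (syst₁(A)/(∏ᵢ systᵢ(A)^{dim Θᵢ(A)})^{1/n})^t · |Ax|`,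
with equality (for `t > 0`) if and only if `x ∈ Λ₁(A)`. -/
theorem stmt16 (n : ℕ) (hn : 0 < n) (A : Matrix.SpecialLinearGroup (Fin n) ℝ)
    (t : ℝ) (ht : 0 ≤ t) (x : EuclideanSpace ℝ (Fin n)) :
    ‖PhiLin (A : Matrix (Fin n) (Fin n) ℝ) t x‖ ≥
        (syst1 (A : Matrix (Fin n) (Fin n) ℝ) /
          (∏ i ∈ Finset.Icc 1 n, systI (A : Matrix (Fin n) (Fin n) ℝ) i ^
            ((Module.finrank ℝ (ThetaE (A : Matrix (Fin n) (Fin n) ℝ) i) : ℝ))) ^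
              ((1 : ℝ) / n)) ^ t *
        ‖Matrix.toEuclideanLin (A : Matrix (Fin n) (Fin n) ℝ) x‖ ∧
      (0 < t →
        (‖PhiLin (A : Matrix (Fin n) (Fin n) ℝ) t x‖ =
            (syst1 (A : Matrix (Fin n) (Fin n) ℝ) /
              (∏ i ∈ Finset.Icc 1 n, systI (A : Matrix (Fin n) (Fin n) ℝ) i ^
                ((Module.finrank ℝ (ThetaE (A : Matrix (Fin n) (Fin n) ℝ) i) : ℝ))) ^
                  ((1 : ℝ) / n)) ^ t *
            ‖Matrix.toEuclideanLin (A : Matrix (Fin n) (Fin n) ℝ) x‖ ↔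
          x ∈ LambdaE (A : Matrix (Fin n) (Fin n) ℝ) 1)) := by
  set M : Matrix (Fin n) (Fin n) ℝ := (A : Matrix (Fin n) (Fin n) ℝ)
  set D := (∏ i ∈ Icc 1 n, systI M i ^ (finrank ℝ (ThetaE M i) : ℝ)) ^ ((1 : ℝ) / n)
  set y := Matrix.toEuclideanLin M x
  have hA : IsUnit M := (Matrix.isUnit_iff_isUnit_det M).2 (by simp [M])
  have hsyst1 : 0 < syst1 M := syst1_pos hn hA
  have hsystI : ∀ i ∈ Icc 1 n, syst1 M ≤ systI M i := fun _ => syst1_le_systI hn hA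
  have hD : 0 < D := Real.rpow_pos_of_pos
    (prod_pos fun i hi => Real.rpow_pos_of_pos (hsyst1.trans_le (hsystI i hi)) _) _
  have hc : cNorm M t = D ^ t := cNorm_eq_rpow fun i hi => hsyst1.le.trans (hsystI i hi)
  have hcpos : 0 < cNorm M t := hc ▸ Real.rpow_pos_of_pos hD t
  have hy : y ∈ ⨆ i ∈ Icc 1 n, ThetaE M i := (iSup_ThetaE_eq_top hn hA).symm ▸ Submodule.mem_top
  have hw : ∀ i ∈ Icc 1 n, syst1 M ^ t ≤ systI M i ^ t := fun i hi =>
    Real.rpow_le_rpow hsyst1.le (hsystI i hi) ht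
  have hrhs : (syst1 M / D) ^ t * ‖y‖ = (cNorm M t)⁻¹ * (syst1 M ^ t * ‖y‖) := by
    rw [hc, Real.div_rpow hsyst1.le hD.le, div_eq_inv_mul, mul_assoc]
  rw [norm_PhiLin_apply hcpos.le, hrhs]
  refine ⟨mul_le_mul_of_nonneg_left (mul_norm_le_norm_sum_smul_starProjection
    pairwise_isOrtho_ThetaE hy (by positivity) hw) (inv_nonneg.2 hcpos.le), fun htpos => ?_⟩
  rw [mul_right_inj' (inv_ne_zero hcpos.ne'), norm_sum_smul_starProjection_eq_mul_norm_iff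
    pairwise_isOrtho_ThetaE hy (by positivity) hw, mem_LambdaE_one_iff hn hA]
  refine forall₂_congr fun i hi => ?_
  rw [Real.rpow_left_inj (hsyst1.le.trans (hsystI i hi)) hsyst1.le htpos.ne']
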